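/- Let W ⊆ C^ω be M-prefix-independent and M-cycle-consistent, m a state of M, and γ, γ' cycles on m such that γγ' is winning on m. Then for every n ≥ 1, the cycle γ(γ')^n is winning on m (repetition independence). -/

import Mathlib

/-!
Call a cycle `u` on `m` winning when `w u^ω ∈ W`. Prefix-independence makes the status of `u v`
and `v u` equal, and cycle-consistency applied to `u, v, u, v, …` makes `u v` winning (losing) when
`u` and `v` both are.

If `γ` is losing, then `γ'` is winning (otherwise `γ γ'` would be losing), and `γ γ'^n` is a
concatenation of the winning cycles `γ γ'` and `γ'`. If `γ` is winning and `γ γ'^N` losing, the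
two facts above turn `γ γ'` and `γ γ'^N` into winning cycles `γ^k γ'^k` and losing cycles
`γ^k γ'^(N k)`. Then the word `γ γ'^N γ^N γ'^(N^2) γ^(N^2) ⋯` is at the same time a concatenation
of the losing cycles `γ^(N^k) γ'^(N^(k+1))` and, after the prefix `γ`, of the winning cycles
`γ'^(N^(k+1)) γ^(N^(k+1))`, which contradicts cycle-consistency.
-/

/-- Concatenation of a finite word with an infinite word. -/
def app {C : Type*} : List C → (ℕ → C) → (ℕ → C)
  | [], w' => w'
  | c :: u, w' => fun i =>
    match i with
    | 0 => c
    | j + 1 => app u w' j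

/-- Extension of the update function of a skeleton to finite words. -/
def updStar {C M : Type*} (upd : M → C → M) (m : M) (w : List C) : M :=
  w.foldl upd m

/-- The infinite word `γ^ω` obtained by repeating a (nonempty) finite word forever. -/
def periodic {C : Type*} [Inhabited C] (γ : List C) : ℕ → C :=
  fun i => γ.getD (i % γ.length) default

/-- The infinite word obtained by concatenating the (nonempty) finite words
`ws 0, ws 1, ws 2, …`. -/
def concatSeq {C : Type*} [Inhabited C] (ws : ℕ → List C) : ℕ → C :=
  fun i => (((List.range (i + 1)).map ws).flatten).getD i default

/-- `W` is `M`-prefix-independent: any two finite words reaching the same state of the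
skeleton from the initial state have the same winning continuations. -/
def PrefIndep {C M : Type*} (upd : M → C → M) (init : M) (W : Set (ℕ → C)) : Prop :=
  ∀ w₁ w₂ : List C, updStar upd init w₁ = updStar upd init w₂ →
    ∀ w' : ℕ → C, (app w₁ w' ∈ W ↔ app w₂ w' ∈ W)

/-- `W` is `M`-cycle-consistent: after any finite word `w`, any infinite concatenation of
winning (resp. losing) cycles on the state reached by `w` yields a winning (resp. losing)
continuation of `w`. -/
def CycleConsistent {C M : Type*} [Inhabited C] (upd : M → C → M) (init : M)
    (W : Set (ℕ → C)) : Prop :=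
  ∀ w : List C, ∀ ws : ℕ → List C,
    (∀ k, ws k ≠ [] ∧ updStar upd (updStar upd init w) (ws k) = updStar upd init w) →
    ((∀ k, app w (periodic (ws k)) ∈ W) → app w (concatSeq ws) ∈ W) ∧
    ((∀ k, app w (periodic (ws k)) ∉ W) → app w (concatSeq ws) ∉ W)

section InfiniteWords

variable {C : Type*}

lemma app_append (u v : List C) (x : ℕ → C) : app (u ++ v) x = app u (app v x) := by
  induction u with
  | nil => rfl
  | cons c u ih =>
    funext i
    cases i with
    | zero => rfl
    | succ j => exact congrFun ih j

lemma app_apply_length_add (u : List C) (x : ℕ → C) (i : ℕ) : app u x (u.length + i) = x i := by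
  induction u with
  | nil => simp [app]
  | cons c u ih => simpa [app, Nat.add_right_comm] using ih

lemma le_length_flatten_map_range {ws : ℕ → List C} (hne : ∀ k, ws k ≠ []) (n : ℕ) :
    n ≤ (((List.range n).map ws).flatten).length := by
  induction n with
  | zero => simp
  | succ n ih =>
    have := List.length_pos_iff.mpr (hne n)
    simp only [List.range_succ, List.map_append, List.flatten_append, List.length_append,
      List.map_singleton, List.flatten_singleton]
    omega

variable [Inhabited C]

lemma app_apply_of_lt {u : List C} (x : ℕ → C) {i : ℕ} (hi : i < u.length) :
    app u x i = u.getD i default := by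
  induction u generalizing i with
  | nil => simp at hi
  | cons c u ih =>
    cases i with
    | zero => rfl
    | succ j => exact ih (Nat.lt_of_succ_lt_succ hi)

lemma concatSeq_apply_of_lt {ws : ℕ → List C} (hne : ∀ k, ws k ≠ []) {n i : ℕ}
    (hi : i < (((List.range n).map ws).flatten).length) :
    concatSeq ws i = (((List.range n).map ws).flatten).getD i default := by
  have getD_eq_of_le : ∀ a b, a ≤ b → i < (((List.range a).map ws).flatten).length →
      (((List.range b).map ws).flatten).getD i default
        = (((List.range a).map ws).flatten).getD i default := by
    intro a b hab hia
    obtain ⟨d, rfl⟩ := Nat.exists_eq_add_of_le hab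
    rw [List.range_add, List.map_append, List.flatten_append, List.getD_append _ _ _ _ hia]
  have hi' : i < (((List.range (i + 1)).map ws).flatten).length :=
    Nat.lt_of_lt_of_le (Nat.lt_succ_self i) (le_length_flatten_map_range hne _)
  rcases le_total n (i + 1) with h | h
  · exact getD_eq_of_le n (i + 1) h hi
  · exact (getD_eq_of_le (i + 1) n h hi').symm

lemma concatSeq_eq_app {ws : ℕ → List C} (hne : ∀ k, ws k ≠ []) :
    concatSeq ws = app (ws 0) (concatSeq fun k => ws (k + 1)) := by
  have hsucc : ∀ n, ((List.range (n + 1)).map ws).flatten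
      = ws 0 ++ ((List.range n).map fun k => ws (k + 1)).flatten := by
    intro n
    simp [List.range_succ_eq_map, Function.comp_def]
  funext i
  rcases lt_or_ge i (ws 0).length with hi | hi
  · rw [app_apply_of_lt _ hi, concatSeq_apply_of_lt hne (n := 1) (by simpa using hi)]
    simp
  · obtain ⟨j, rfl⟩ := Nat.exists_eq_add_of_le hi
    have hj := le_length_flatten_map_range (fun k => hne (k + 1)) (j + 1)
    rw [app_apply_length_add,
      concatSeq_apply_of_lt hne (n := j + 2) (by rw [hsucc, List.length_append]; omega),
      concatSeq_apply_of_lt (fun k => hne (k + 1)) (n := j + 1) (by omega), hsucc,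
      List.getD_append_right _ _ _ _ le_self_add, Nat.add_sub_cancel_left]

lemma concatSeq_eq_of_eq_app {ws : ℕ → List C} (hne : ∀ k, ws k ≠ []) {x : ℕ → ℕ → C}
    (hx : ∀ k, x k = app (ws k) (x (k + 1))) : concatSeq ws = x 0 := by
  have hunfold : ∀ n, x 0 = app (((List.range n).map ws).flatten) (x n) := by
    intro n
    induction n with
    | zero => rfl
    | succ n ih => simp [ih, List.range_succ, app_append, ← hx]
  funext i
  rw [hunfold (i + 1), app_apply_of_lt _ (Nat.lt_of_lt_of_le (Nat.lt_succ_self i)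
    (le_length_flatten_map_range hne _))]
  rfl

lemma periodic_eq_app (u : List C) : periodic u = app u (periodic u) := by
  funext i
  rcases lt_or_ge i u.length with hi | hi
  · rw [app_apply_of_lt _ hi, periodic, Nat.mod_eq_of_lt hi]
  · obtain ⟨j, rfl⟩ := Nat.exists_eq_add_of_le hi
    rw [app_apply_length_add, periodic, periodic, Nat.add_mod_left]

lemma eq_periodic_of_eq_app {u : List C} (hu : u ≠ []) {x : ℕ → C} (hx : x = app u x) :
    x = periodic u :=
  (concatSeq_eq_of_eq_app (x := fun _ => x) (fun _ => hu) fun _ => hx).symm.trans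
    (concatSeq_eq_of_eq_app (x := fun _ => periodic u) (fun _ => hu) fun _ => periodic_eq_app u)

lemma periodic_append_comm {u v : List C} (huv : u ++ v ≠ []) :
    periodic (v ++ u) = app v (periodic (u ++ v)) := by
  refine (eq_periodic_of_eq_app (by simpa [and_comm] using huv) ?_).symm
  rw [app_append, ← app_append u v, ← periodic_eq_app]

lemma concatSeq_alternate {u v : List C} (hu : u ≠ []) (hv : v ≠ []) :
    concatSeq (fun k => if Even k then u else v) = periodic (u ++ v) :=
  concatSeq_eq_of_eq_app
    (x := fun k => if Even k then periodic (u ++ v) else app v (periodic (u ++ v)))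
    (fun k => by split <;> assumption)
    (fun k => by
      by_cases hk : Even k
      · simp [hk, Nat.even_add_one, ← app_append, ← periodic_eq_app]
      · simp [hk, Nat.even_add_one])

lemma concatSeq_append_shift {x y : ℕ → List C} (hx : ∀ k, x k ≠ []) :
    concatSeq (fun k => x k ++ y k) = app (x 0) (concatSeq fun k => y k ++ x (k + 1)) := by
  refine concatSeq_eq_of_eq_app
    (x := fun k => app (x k) (concatSeq fun j => y (j + k) ++ x (j + k + 1)))
    (fun k => List.append_ne_nil_of_left_ne_nil (hx k) _) (fun k => ?_)
  rw [concatSeq_eq_app fun j => List.append_ne_nil_of_right_ne_nil _ (hx _)]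
  simp only [app_append, Nat.zero_add, Nat.add_right_comm _ 1 k, Nat.add_assoc]

end InfiniteWords

section Cycles

variable {C M : Type*}

def wordPow (u : List C) (k : ℕ) : List C := (List.replicate k u).flatten

lemma wordPow_one (u : List C) : wordPow u 1 = u := by simp [wordPow]

lemma wordPow_succ (u : List C) (k : ℕ) : wordPow u (k + 1) = u ++ wordPow u k := by
  simp [wordPow, List.replicate_succ]

lemma wordPow_add (u : List C) (k l : ℕ) : wordPow u (k + l) = wordPow u k ++ wordPow u l := by
  rw [wordPow, wordPow, wordPow, List.replicate_add, List.flatten_append]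

lemma updStar_append (upd : M → C → M) (m : M) (u v : List C) :
    updStar upd m (u ++ v) = updStar upd (updStar upd m u) v :=
  List.foldl_append

lemma updStar_wordPow {upd : M → C → M} {m : M} {u : List C} (hu : updStar upd m u = m)
    (k : ℕ) : updStar upd m (wordPow u k) = m := by
  induction k with
  | zero => rfl
  | succ k ih => rw [wordPow_succ, updStar_append, hu, ih]

def IsCycle (upd : M → C → M) (m : M) (u : List C) : Prop :=
  u ≠ [] ∧ updStar upd m u = m

variable {upd : M → C → M} {m : M} {u v : List C}

lemma IsCycle.append_right (hu : IsCycle upd m u) (hv : updStar upd m v = m) :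
    IsCycle upd m (u ++ v) :=
  ⟨List.append_ne_nil_of_left_ne_nil hu.1 v, by rw [updStar_append, hu.2, hv]⟩

lemma IsCycle.append_left (hu : updStar upd m u = m) (hv : IsCycle upd m v) :
    IsCycle upd m (u ++ v) :=
  ⟨List.append_ne_nil_of_right_ne_nil u hv.1, by rw [updStar_append, hu, hv.2]⟩

lemma IsCycle.wordPow (hu : IsCycle upd m u) {k : ℕ} (hk : k ≠ 0) :
    IsCycle upd m (wordPow u k) := by
  obtain ⟨k, rfl⟩ := Nat.exists_eq_succ_of_ne_zero hk
  rw [wordPow_succ]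
  exact hu.append_right (updStar_wordPow hu.2 k)

end Cycles

section Winning

variable {C M : Type*} {upd : M → C → M} {init m : M} {S : Set (ℕ → C)} {w u v : List C}

lemma PrefIndep.compl (hpi : PrefIndep upd init S) : PrefIndep upd init Sᶜ :=
  fun w₁ w₂ h x => not_congr (hpi w₁ w₂ h x)

variable [Inhabited C]

lemma CycleConsistent.compl (hcc : CycleConsistent upd init S) : CycleConsistent upd init Sᶜ :=
  fun w ws hws => ⟨(hcc w ws hws).2, fun h => not_not.2 <|
    (hcc w ws hws).1 fun k => not_not.1 (h k)⟩

lemma CycleConsistent.app_concatSeq_mem (hcc : CycleConsistent upd init S)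
    (hw : updStar upd init w = m) {ws : ℕ → List C} (hws : ∀ k, IsCycle upd m (ws k))
    (h : ∀ k, app w (periodic (ws k)) ∈ S) : app w (concatSeq ws) ∈ S :=
  (hcc w ws fun k => hw ▸ hws k).1 h

lemma app_periodic_append_mem (hcc : CycleConsistent upd init S)
    (hw : updStar upd init w = m) (hu : IsCycle upd m u) (hv : IsCycle upd m v)
    (hu_mem : app w (periodic u) ∈ S) (hv_mem : app w (periodic v) ∈ S) :
    app w (periodic (u ++ v)) ∈ S := by
  rw [← concatSeq_alternate hu.1 hv.1]
  exact hcc.app_concatSeq_mem hw (fun k => by split <;> assumption)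
    (fun k => by split <;> assumption)

lemma app_periodic_append_comm_mem_iff (hpi : PrefIndep upd init S)
    (hw : updStar upd init w = m) (huv : u ++ v ≠ []) (hv : updStar upd m v = m) :
    app w (periodic (v ++ u)) ∈ S ↔ app w (periodic (u ++ v)) ∈ S := by
  rw [periodic_append_comm huv, ← app_append]
  exact (hpi w (w ++ v) (by rw [updStar_append, hw, hv]) _).symm

/-- Induction step: rotate `u v^r` to `v^r u`, prepend it to `u^k v^(k r)`, and rotate the new
`v^r` to the end. -/
lemma app_periodic_wordPow_append_wordPow_mem (hpi : PrefIndep upd init S)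
    (hcc : CycleConsistent upd init S) (hw : updStar upd init w = m) (hu : IsCycle upd m u)
    (hv : updStar upd m v = m) {r : ℕ} (h : app w (periodic (u ++ wordPow v r)) ∈ S)
    {k : ℕ} (hk : k ≠ 0) : app w (periodic (wordPow u k ++ wordPow v (k * r))) ∈ S := by
  have hvr := updStar_wordPow hv r
  induction k, Nat.one_le_iff_ne_zero.2 hk using Nat.le_induction with
  | base => rwa [wordPow_one, Nat.one_mul]
  | succ k hk ih =>
    have hrot : app w (periodic (wordPow v r ++ u)) ∈ S :=
      (app_periodic_append_comm_mem_iff hpi hw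
        (List.append_ne_nil_of_left_ne_nil hu.1 _) hvr).2 h
    have hcat := app_periodic_append_mem hcc hw (hu.append_left hvr)
      ((hu.wordPow (by omega)).append_right (updStar_wordPow hv _)) hrot (ih (by omega))
    rw [List.append_assoc, ← List.append_assoc u, ← wordPow_succ] at hcat
    have hcyc : IsCycle upd m (wordPow u (k + 1) ++ wordPow v (k * r)) :=
      (hu.wordPow k.succ_ne_zero).append_right (updStar_wordPow hv _)
    rwa [app_periodic_append_comm_mem_iff hpi hw (List.append_ne_nil_of_left_ne_nil hcyc.1 _) hvr,
      List.append_assoc, ← wordPow_add, ← Nat.succ_mul] at hcat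

lemma app_periodic_append_wordPow_mem {W : Set (ℕ → C)} (hpi : PrefIndep upd init W)
    (hcc : CycleConsistent upd init W) (hw : updStar upd init w = m) (hu : IsCycle upd m u)
    (hv : updStar upd m v = m) (hu_win : app w (periodic u) ∈ W)
    (huv_win : app w (periodic (u ++ v)) ∈ W) (N : ℕ) :
    app w (periodic (u ++ wordPow v N)) ∈ W := by
  obtain rfl | hN := eq_or_ne N 0
  · simpa [wordPow] using hu_win
  by_contra hlose
  set x : ℕ → List C := fun k => wordPow u (N ^ k)
  set y : ℕ → List C := fun k => wordPow v (N ^ (k + 1))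
  have hx : ∀ k, IsCycle upd m (x k) := fun k => hu.wordPow (pow_ne_zero k hN)
  have hy : ∀ k, updStar upd m (y k) = m := fun k => updStar_wordPow hv _
  have hlosing : ∀ k, app w (periodic (x k ++ y k)) ∈ Wᶜ := fun k => by
    simpa only [x, y, pow_succ] using app_periodic_wordPow_append_wordPow_mem hpi.compl
      hcc.compl hw hu hv hlose (pow_ne_zero k hN)
  have hwinning : ∀ k, app w (periodic (y k ++ x (k + 1))) ∈ W := fun k => by
    have h := app_periodic_wordPow_append_wordPow_mem hpi hcc hw hu hv
      (by rwa [wordPow_one]) (pow_ne_zero (k + 1) hN)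
    rwa [Nat.mul_one, ← app_periodic_append_comm_mem_iff hpi hw
      (List.append_ne_nil_of_left_ne_nil (hx (k + 1)).1 _) (hy k)] at h
  have hw' : updStar upd init (w ++ x 0) = m := by rw [updStar_append, hw, (hx 0).2]
  have h₁ := hcc.compl.app_concatSeq_mem hw (fun k => (hx k).append_right (hy k)) hlosing
  have h₂ := hcc.app_concatSeq_mem hw' (fun k => (hx (k + 1)).append_left (hy k))
    fun k => (hpi w (w ++ x 0) (hw.trans hw'.symm) _).1 (hwinning k)
  rw [app_append, ← concatSeq_append_shift fun k => (hx k).1] at h₂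
  exact h₁ h₂

end Winning

theorem stmt5_general {C M : Type*} [Inhabited C]
    (upd : M → C → M) (init : M) (W : Set (ℕ → C))
    (hpi : PrefIndep upd init W) (hcc : CycleConsistent upd init W)
    (m : M) (w : List C) (hw : updStar upd init w = m)
    (γ γ' : List C) (hγne : γ ≠ []) (hγ'ne : γ' ≠ [])
    (hγ : updStar upd m γ = m) (hγ' : updStar upd m γ' = m)
    (hwin : app w (periodic (γ ++ γ')) ∈ W) :
    ∀ n : ℕ, 1 ≤ n → app w (periodic (γ ++ (List.replicate n γ').flatten)) ∈ W := by
  intro n hn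
  change app w (periodic (γ ++ wordPow γ' n)) ∈ W
  by_cases hγ_win : app w (periodic γ) ∈ W
  · exact app_periodic_append_wordPow_mem hpi hcc hw ⟨hγne, hγ⟩ hγ' hγ_win hwin n
  have hγ'_win : app w (periodic γ') ∈ W := by
    by_contra hγ'_lose
    exact app_periodic_append_mem hcc.compl hw ⟨hγne, hγ⟩ ⟨hγ'ne, hγ'⟩ hγ_win hγ'_lose hwin
  induction n, hn using Nat.le_induction with
  | base => rwa [wordPow_one]
  | succ n hn ih =>
    rw [wordPow_add, wordPow_one, ← List.append_assoc]
    exact app_periodic_append_mem hcc hw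
      (IsCycle.append_right ⟨hγne, hγ⟩ (updStar_wordPow hγ' n)) ⟨hγ'ne, hγ'⟩ ih hγ'_win

/-- repetition independence: if the combined cycle `γγ'` is winning on `m`,
then `γ(γ')^n` is winning on `m` for every `n ≥ 1`. -/
theorem stmt5 {C M : Type*} [Inhabited C] [Finite M]
    (upd : M → C → M) (init : M) (W : Set (ℕ → C))
    (hpi : PrefIndep upd init W) (hcc : CycleConsistent upd init W)
    (m : M) (w : List C) (hw : updStar upd init w = m)
    (γ γ' : List C) (hγne : γ ≠ []) (hγ'ne : γ' ≠ [])
    (hγ : updStar upd m γ = m) (hγ' : updStar upd m γ' = m)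
    (hwin : app w (periodic (γ ++ γ')) ∈ W) :
    ∀ n : ℕ, 1 ≤ n → app w (periodic (γ ++ (List.replicate n γ').flatten)) ∈ W :=
  stmt5_general upd init W hpi hcc m w hw γ γ' hγne hγ'ne hγ hγ' hwin
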